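/- arXiv:0912.0185 — 6 statements merged into one kernel-verified Lean document; each statement's English description precedes it below -/
import Mathlib

section
/- For every real number z, exp(-z²/2) ≤ 2√π · N(z) · √(-log N(z)), where N(z) = (1/√(2π)) ∫_{-∞}^{z} exp(-ρ²/2) dρ is the standard normal cumulative distribution function. (Note: for z where N(z) is close to 1, -log N(z) is small but positive since N(z) < 1.) -/
/-!
With `φ` the standard normal density and `λ = φ / N` the inverse Mills ratio, the claim is
`λ² ≤ -2 log N`. The difference `-2 log N - λ²` has derivative `-2λ (1 - λ (z + λ))`, and
`1 - λ (z + λ)` is the variance of a standard normal variable conditioned on `X ≤ z`, hence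
nonnegative. So the difference is antitone; it tends to `0` at `+∞`, hence it is nonnegative.
-/

open MeasureTheory

/-- The standard normal cumulative distribution function. -/
noncomputable def stdNormalCDF (z : ℝ) : ℝ :=
  (Real.sqrt (2 * Real.pi))⁻¹ * ∫ ρ in Set.Iic z, Real.exp (-ρ ^ 2 / 2)

open Real Set Filter Topology ProbabilityTheory

theorem hasDerivAt_integral_Iic {E : Type*} [NormedAddCommGroup E] [NormedSpace ℝ E]
    [CompleteSpace E] {f : ℝ → E} (hf : Continuous f) (hfi : Integrable f) (x : ℝ) :
    HasDerivAt (fun z ↦ ∫ t in Iic z, f t) (f x) x := by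
  have hsplit : (fun z ↦ ∫ t in Iic z, f t) = fun z ↦ (∫ t in Iic 0, f t) + ∫ t in 0..z, f t := by
    funext z
    rw [← intervalIntegral.integral_Iic_sub_Iic hfi.integrableOn hfi.integrableOn,
      add_sub_cancel]
  rw [hsplit]
  exact (intervalIntegral.integral_hasDerivAt_right (hf.intervalIntegrable _ _)
    hf.aestronglyMeasurable.stronglyMeasurableAtFilter hf.continuousAt).const_add _

local notation "φ" => gaussianPDFReal 0 1

theorem gaussianPDFReal_zero_one (x : ℝ) : φ x = (√(2 * π))⁻¹ * exp (-x ^ 2 / 2) := by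
  simp [gaussianPDFReal]

theorem hasDerivAt_gaussianPDFReal_zero_one (x : ℝ) : HasDerivAt φ (-x * φ x) x := by
  have hexponent : HasDerivAt (fun y ↦ -y ^ 2 / 2) (-x) x := by
    refine (((hasDerivAt_pow 2 x).fun_neg).div_const 2).congr_deriv ?_
    norm_num; ring
  rw [funext gaussianPDFReal_zero_one]
  exact (hexponent.exp.const_mul _).congr_deriv (by ring)

theorem stdNormalCDF_eq_integral (z : ℝ) : stdNormalCDF z = ∫ t in Iic z, φ t := by
  simp_rw [gaussianPDFReal_zero_one, integral_const_mul, stdNormalCDF]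

theorem stdNormalCDF_eq_cdf : stdNormalCDF = cdf (gaussianReal 0 1) := by
  funext z
  rw [cdf_eq_real, measureReal_def, gaussianReal_apply_eq_integral _ one_ne_zero,
    ENNReal.toReal_ofReal (setIntegral_nonneg measurableSet_Iic fun t _ ↦
      gaussianPDFReal_nonneg _ _ t), stdNormalCDF_eq_integral]

theorem stdNormalCDF_pos (z : ℝ) : 0 < stdNormalCDF z := by
  rw [stdNormalCDF_eq_integral, setIntegral_pos_iff_support_of_nonneg_ae
    (ae_of_all _ (gaussianPDFReal_nonneg 0 1)) (integrable_gaussianPDFReal 0 1).integrableOn,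
    Function.support_eq_univ fun x ↦ (gaussianPDFReal_pos 0 1 x one_ne_zero).ne']
  simp

theorem hasDerivAt_stdNormalCDF (x : ℝ) : HasDerivAt stdNormalCDF (φ x) x := by
  simp_rw [funext stdNormalCDF_eq_integral]
  exact hasDerivAt_integral_Iic
    (continuous_iff_continuousAt.2 fun x ↦ (hasDerivAt_gaussianPDFReal_zero_one x).continuousAt)
    (integrable_gaussianPDFReal 0 1) x

theorem integrable_pow_mul_gaussianPDFReal_zero_one (n : ℕ) :
    Integrable fun x ↦ x ^ n * φ x := by
  have h := (integrable_rpow_mul_exp_neg_mul_sq (b := 1 / 2) (by norm_num)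
    (s := n) (by linarith [n.cast_nonneg (α := ℝ)])).const_mul (√(2 * π))⁻¹
  refine h.congr (ae_of_all _ fun x ↦ ?_)
  simp only [rpow_natCast, gaussianPDFReal_zero_one]
  ring_nf

theorem tendsto_pow_mul_gaussianPDFReal_zero_one_cocompact (n : ℕ) :
    Tendsto (fun t ↦ t ^ n * φ t) (cocompact ℝ) (𝓝 0) := by
  have h := (tendsto_rpow_abs_mul_exp_neg_mul_sq_cocompact (a := 1 / 2) (by norm_num) n).const_mul
    (√(2 * π))⁻¹
  rw [mul_zero] at h
  refine tendsto_zero_iff_norm_tendsto_zero.2 (h.congr fun t ↦ ?_)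
  rw [norm_mul, norm_pow, Real.norm_eq_abs, Real.norm_of_nonneg (gaussianPDFReal_nonneg 0 1 t),
    gaussianPDFReal_zero_one, rpow_natCast]
  ring_nf

theorem integral_Iic_sq_sub_mul_gaussianPDFReal (m z : ℝ) :
    ∫ t in Iic z, (t - m) ^ 2 * φ t = (1 + m ^ 2) * stdNormalCDF z - (z - 2 * m) * φ z := by
  have hderiv : ∀ t, HasDerivAt (fun t ↦ (1 + m ^ 2) * stdNormalCDF t - (t - 2 * m) * φ t)
      ((t - m) ^ 2 * φ t) t := fun t ↦
    (((hasDerivAt_stdNormalCDF t).const_mul _).sub (((hasDerivAt_id t).sub_const _).mul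
      (hasDerivAt_gaussianPDFReal_zero_one t))).congr_deriv (by simp only [id]; ring)
  have hint : Integrable fun t ↦ (t - m) ^ 2 * φ t := by
    refine (((integrable_pow_mul_gaussianPDFReal_zero_one 2).sub
      ((integrable_pow_mul_gaussianPDFReal_zero_one 1).const_mul (2 * m))).add
      ((integrable_pow_mul_gaussianPDFReal_zero_one 0).const_mul (m ^ 2))).congr
      (ae_of_all _ fun t ↦ ?_)
    simp only [Pi.add_apply, Pi.sub_apply]
    ring
  have hlim : Tendsto (fun t ↦ (1 + m ^ 2) * stdNormalCDF t - (t - 2 * m) * φ t) atBot (𝓝 0) := by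
    have hN : Tendsto stdNormalCDF atBot (𝓝 0) := stdNormalCDF_eq_cdf ▸ tendsto_cdf_atBot _
    have hφ (n : ℕ) := (tendsto_pow_mul_gaussianPDFReal_zero_one_cocompact n).mono_left
      atBot_le_cocompact
    have := (hN.const_mul (1 + m ^ 2)).sub ((hφ 1).sub ((hφ 0).const_mul (2 * m)))
    simp only [mul_zero, sub_zero, pow_one, pow_zero, one_mul] at this
    refine this.congr fun t ↦ ?_
    ring
  rw [integral_Iic_of_hasDerivAt_of_tendsto' (fun t _ ↦ hderiv t) hint.integrableOn hlim, sub_zero]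

noncomputable def inverseMillsRatio (z : ℝ) : ℝ := φ z / stdNormalCDF z

theorem inverseMillsRatio_nonneg (z : ℝ) : 0 ≤ inverseMillsRatio z :=
  div_nonneg (gaussianPDFReal_nonneg 0 1 z) (stdNormalCDF_pos z).le

theorem hasDerivAt_inverseMillsRatio (z : ℝ) :
    HasDerivAt inverseMillsRatio (-inverseMillsRatio z * (z + inverseMillsRatio z)) z := by
  have hN := (stdNormalCDF_pos z).ne'
  refine ((hasDerivAt_gaussianPDFReal_zero_one z).div (hasDerivAt_stdNormalCDF z) hN).congr_deriv ?_
  simp only [inverseMillsRatio]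
  field_simp
  ring

theorem inverseMillsRatio_mul_add_le_one (z : ℝ) :
    inverseMillsRatio z * (z + inverseMillsRatio z) ≤ 1 := by
  set r := inverseMillsRatio z
  -- the variance of `X` given `X ≤ z`, about the conditional mean `-r`, is `1 - r (z + r)`
  have hN := stdNormalCDF_pos z
  have hφ : φ z = r * stdNormalCDF z := (div_mul_cancel₀ _ hN.ne').symm
  have h := integral_Iic_sq_sub_mul_gaussianPDFReal (-r) z ▸ setIntegral_nonneg measurableSet_Iic
    fun t _ ↦ mul_nonneg (sq_nonneg (t - -r)) (gaussianPDFReal_nonneg 0 1 t)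
  rw [hφ] at h
  nlinarith

theorem inverseMillsRatio_sq_le (z : ℝ) : inverseMillsRatio z ^ 2 ≤ -2 * log (stdNormalCDF z) := by
  set F := fun z ↦ -2 * log (stdNormalCDF z) - inverseMillsRatio z ^ 2
  have hderiv (z : ℝ) : HasDerivAt F
      (-2 * inverseMillsRatio z * (1 - inverseMillsRatio z * (z + inverseMillsRatio z))) z := by
    refine ((((hasDerivAt_stdNormalCDF z).log (stdNormalCDF_pos z).ne').const_mul (-2)).sub
      ((hasDerivAt_inverseMillsRatio z).pow 2)).congr_deriv ?_
    simp only [inverseMillsRatio]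
    ring
  have hanti : Antitone F := antitone_of_hasDerivAt_nonpos hderiv fun z ↦
    mul_nonpos_of_nonpos_of_nonneg
      (mul_nonpos_of_nonpos_of_nonneg (by norm_num) (inverseMillsRatio_nonneg z))
      (sub_nonneg.2 (inverseMillsRatio_mul_add_le_one z))
  have hlim : Tendsto F atTop (𝓝 0) := by
    have hN : Tendsto stdNormalCDF atTop (𝓝 1) := stdNormalCDF_eq_cdf ▸ tendsto_cdf_atTop _
    have hφ : Tendsto φ atTop (𝓝 0) := by
      simpa using (tendsto_pow_mul_gaussianPDFReal_zero_one_cocompact 0).mono_left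
        atTop_le_cocompact
    simpa [F, inverseMillsRatio] using
      ((hN.log one_ne_zero).const_mul (-2)).sub ((hφ.div hN one_ne_zero).pow 2)
  have := le_of_tendsto hlim ((eventually_ge_atTop z).mono fun w hw ↦ hanti hw)
  simpa [F] using this

/-- For every real `z`, `exp(-z²/2) ≤ 2√π · N(z) · √(-log N(z))`. -/
theorem normal_cdf_log_inequality (z : ℝ) :
    Real.exp (-z ^ 2 / 2) ≤
      2 * Real.sqrt Real.pi * stdNormalCDF z * Real.sqrt (-Real.log (stdNormalCDF z)) := by
  have hN := stdNormalCDF_pos z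
  have hexp : exp (-z ^ 2 / 2) = √(2 * π) * inverseMillsRatio z * stdNormalCDF z := by
    rw [mul_assoc, inverseMillsRatio, div_mul_cancel₀ _ hN.ne', gaussianPDFReal_zero_one,
      mul_inv_cancel_left₀ (by positivity)]
  have hratio : inverseMillsRatio z ≤ √2 * √(-log (stdNormalCDF z)) := by
    rw [← sqrt_mul zero_le_two]
    exact le_sqrt_of_sq_le (by linarith [inverseMillsRatio_sq_le z])
  calc exp (-z ^ 2 / 2) = √(2 * π) * inverseMillsRatio z * stdNormalCDF z := hexp
    _ ≤ √(2 * π) * (√2 * √(-log (stdNormalCDF z))) * stdNormalCDF z := by gcongr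
    _ = 2 * √π * stdNormalCDF z * √(-log (stdNormalCDF z)) := by
      rw [sqrt_mul zero_le_two]
      linear_combination (√π * stdNormalCDF z * √(-log (stdNormalCDF z))) *
        mul_self_sqrt zero_le_two
end

section
/- There is a universal constant C > 0 such that for all real a and all η > 0, ∫_{a+η}^∞ e^{-z²/2} dz ≥ exp(-η²/2 - C·η·max(a,1)) · ∫_a^∞ e^{-z²/2} dz. -/
/-!
Substituting `z = x + η` gives
`∫_{a+η}^∞ e^{-z²/2} dz = e^{-η²/2} ∫_a^∞ e^{-ηx} e^{-x²/2} dx`.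
By Jensen's inequality for the convex function `x ↦ e^{-ηx}` (in its tangent-line form) with
respect to the Gaussian weight on `(a, ∞)`, the last integral is at least
`e^{-ηm} ∫_a^∞ e^{-x²/2} dx`, where `m = e^{-a²/2} / ∫_a^∞ e^{-x²/2} dx` is the mean of that
weight. The mean is at most `e^{3/2} max(a, 1)`, because the weight drops by at most the factor
`e^{-3/2}` on the interval `[a, a + 1 / max(a, 1)]`.
-/

open MeasureTheory Set Filter Topology

theorem setIntegral_Ioi_add_right {E : Type*} [NormedAddCommGroup E] [NormedSpace ℝ E]
    (f : ℝ → E) (a c : ℝ) : ∫ x in Ioi (a + c), f x = ∫ x in Ioi a, f (x + c) := by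
  have h := (measurePreserving_add_right volume c).setIntegral_preimage_emb
    (MeasurableEquiv.addRight c).measurableEmbedding f (Ioi (a + c))
  simpa only [preimage_add_const_Ioi, add_sub_cancel_right] using h.symm

theorem exp_neg_mul_mul_integral_le_integral_exp_neg_mul {α : Type*} [MeasurableSpace α]
    {μ : Measure α} {g X : α → ℝ} {η K : ℝ} (hη : 0 ≤ η) (hg : 0 ≤ g)
    (hg_int : Integrable g μ) (hXg_int : Integrable (fun x => X x * g x) μ)
    (hexp_int : Integrable (fun x => Real.exp (-(η * X x)) * g x) μ)
    (hK : ∫ x, X x * g x ∂μ ≤ K * ∫ x, g x ∂μ) :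
    Real.exp (-(η * K)) * ∫ x, g x ∂μ ≤ ∫ x, Real.exp (-(η * X x)) * g x ∂μ := by
  have tangent : ∀ x,
      Real.exp (-(η * K)) * ((1 + η * K) * g x - η * (X x * g x)) ≤
        Real.exp (-(η * X x)) * g x := by
    intro x
    have hgx := hg x
    calc Real.exp (-(η * K)) * ((1 + η * K) * g x - η * (X x * g x))
        = Real.exp (-(η * K)) * (η * (K - X x) + 1) * g x := by ring
      _ ≤ Real.exp (-(η * K)) * Real.exp (η * (K - X x)) * g x := by
        gcongr; exact Real.add_one_le_exp _
      _ = Real.exp (-(η * X x)) * g x := by rw [← Real.exp_add]; ring_nf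
  calc Real.exp (-(η * K)) * ∫ x, g x ∂μ
      ≤ Real.exp (-(η * K)) *
          ((1 + η * K) * ∫ x, g x ∂μ - η * ∫ x, X x * g x ∂μ) := by
        gcongr; nlinarith
    _ = ∫ x, Real.exp (-(η * K)) * ((1 + η * K) * g x - η * (X x * g x)) ∂μ := by
        rw [integral_const_mul, integral_sub (hg_int.const_mul _) (hXg_int.const_mul _),
          integral_const_mul, integral_const_mul]
    _ ≤ ∫ x, Real.exp (-(η * X x)) * g x ∂μ :=
        integral_mono (((hg_int.const_mul _).sub (hXg_int.const_mul _)).const_mul _) hexp_int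
          tangent

theorem integrable_exp_neg_sq_div_two : Integrable fun x : ℝ => Real.exp (-x ^ 2 / 2) := by
  refine (integrable_exp_neg_mul_sq (b := 1 / 2) (by norm_num)).congr (.of_forall fun x => ?_)
  ring_nf

theorem integrable_mul_exp_neg_sq_div_two :
    Integrable fun x : ℝ => x * Real.exp (-x ^ 2 / 2) := by
  refine (integrable_mul_exp_neg_mul_sq (b := 1 / 2) (by norm_num)).congr
    (.of_forall fun x => ?_)
  ring_nf

theorem exp_neg_add_sq_div_two (x c : ℝ) :
    Real.exp (-(x + c) ^ 2 / 2) =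
      Real.exp (-c ^ 2 / 2) * (Real.exp (-(c * x)) * Real.exp (-x ^ 2 / 2)) := by
  rw [← Real.exp_add, ← Real.exp_add]; ring_nf

theorem integrable_exp_neg_mul_mul_exp_neg_sq_div_two (c : ℝ) :
    Integrable fun x : ℝ => Real.exp (-(c * x)) * Real.exp (-x ^ 2 / 2) := by
  refine ((integrable_exp_neg_sq_div_two.comp_add_right c).const_mul
    (Real.exp (c ^ 2 / 2))).congr (.of_forall fun x => ?_)
  simp only [← Real.exp_add]
  ring_nf

theorem setIntegral_Ioi_mul_exp_neg_sq_div_two (a : ℝ) :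
    ∫ x in Ioi a, x * Real.exp (-x ^ 2 / 2) = Real.exp (-a ^ 2 / 2) := by
  have hderiv : ∀ x : ℝ,
      HasDerivAt (fun x => -Real.exp (-x ^ 2 / 2)) (x * Real.exp (-x ^ 2 / 2)) x := by
    intro x
    have hquad : HasDerivAt (fun x : ℝ => -x ^ 2 / 2) (-x) x := by
      simpa using ((hasDerivAt_pow 2 x).neg.div_const 2).congr_deriv (by ring : _ = -x)
    exact hquad.exp.neg.congr_deriv (by ring)
  have hlim : Tendsto (fun x : ℝ => -Real.exp (-x ^ 2 / 2)) atTop (𝓝 0) := by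
    have h : Tendsto (fun x : ℝ => -x ^ 2 / 2) atTop atBot :=
      (tendsto_neg_atBot_iff.mpr (tendsto_pow_atTop two_ne_zero)).atBot_div_const two_pos
    simpa using (Real.tendsto_exp_atBot.comp h).neg
  rw [integral_Ioi_of_hasDerivAt_of_tendsto (hderiv a).continuousAt.continuousWithinAt
    (fun x _ => hderiv x) integrable_mul_exp_neg_sq_div_two.integrableOn hlim]
  simp

theorem exp_neg_sq_div_two_le_mul_setIntegral_Ioi (a : ℝ) :
    Real.exp (-a ^ 2 / 2) ≤
      Real.exp (3 / 2) * max a 1 * ∫ x in Ioi a, Real.exp (-x ^ 2 / 2) := by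
  set M := max a 1
  have hM : 1 ≤ M := le_max_right a 1
  have haM : a ≤ M := le_max_left a 1
  have hM_pos : 0 < M := by linarith
  have hflat : ∀ x ∈ Ioc a (a + M⁻¹),
      Real.exp (-(3 / 2)) * Real.exp (-a ^ 2 / 2) ≤ Real.exp (-x ^ 2 / 2) := by
    rintro x ⟨hax, hxa⟩
    rw [← Real.exp_add, Real.exp_le_exp]
    have hinv_le : M⁻¹ ≤ 1 := inv_le_one_of_one_le₀ hM
    have hinv_mul : M⁻¹ * M = 1 := inv_mul_cancel₀ hM_pos.ne'
    nlinarith [inv_pos.mpr hM_pos]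
  have hlocal : M⁻¹ * (Real.exp (-(3 / 2)) * Real.exp (-a ^ 2 / 2))
      ≤ ∫ x in Ioc a (a + M⁻¹), Real.exp (-x ^ 2 / 2) := by
    have h := setIntegral_ge_of_const_le measurableSet_Ioc (by simp [Real.volume_Ioc]) hflat
      integrable_exp_neg_sq_div_two.integrableOn
    simpa [measureReal_def, Real.volume_Ioc, (inv_pos.mpr hM_pos).le] using h
  have hmono : ∫ x in Ioc a (a + M⁻¹), Real.exp (-x ^ 2 / 2)
      ≤ ∫ x in Ioi a, Real.exp (-x ^ 2 / 2) :=
    setIntegral_mono_set integrable_exp_neg_sq_div_two.integrableOn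
      (.of_forall fun x => (Real.exp_pos _).le) Ioc_subset_Ioi_self.eventuallyLE
  calc Real.exp (-a ^ 2 / 2)
      = Real.exp (3 / 2) * M * (M⁻¹ * (Real.exp (-(3 / 2)) * Real.exp (-a ^ 2 / 2))) := by
        rw [Real.exp_neg]; field_simp
    _ ≤ Real.exp (3 / 2) * M * ∫ x in Ioi a, Real.exp (-x ^ 2 / 2) := by
        gcongr; exact hlocal.trans hmono

/-- There is a universal constant `C > 0` such that for all real `a` and all `η > 0`,
`∫_{a+η}^∞ e^{-z²/2} dz ≥ exp(-η²/2 - C·η·max(a,1)) · ∫_a^∞ e^{-z²/2} dz`. -/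
theorem gaussian_tail_shift_lower_bound :
    ∃ C : ℝ, 0 < C ∧ ∀ a η : ℝ, 0 < η →
      Real.exp (-η ^ 2 / 2 - C * η * max a 1) * (∫ z in Set.Ioi a, Real.exp (-z ^ 2 / 2)) ≤
        ∫ z in Set.Ioi (a + η), Real.exp (-z ^ 2 / 2) := by
  refine ⟨Real.exp (3 / 2), Real.exp_pos _, fun a η hη => ?_⟩
  set K := Real.exp (3 / 2) * max a 1 with hK
  have hmean : ∫ x in Ioi a, x * Real.exp (-x ^ 2 / 2)
      ≤ K * ∫ x in Ioi a, Real.exp (-x ^ 2 / 2) := by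
    rw [setIntegral_Ioi_mul_exp_neg_sq_div_two]
    exact exp_neg_sq_div_two_le_mul_setIntegral_Ioi a
  have hjensen := exp_neg_mul_mul_integral_le_integral_exp_neg_mul (X := fun x => x)
    (g := fun x => Real.exp (-x ^ 2 / 2)) hη.le (fun _ => (Real.exp_pos _).le)
    integrable_exp_neg_sq_div_two.integrableOn integrable_mul_exp_neg_sq_div_two.integrableOn
    (integrable_exp_neg_mul_mul_exp_neg_sq_div_two η).integrableOn hmean
  calc Real.exp (-η ^ 2 / 2 - Real.exp (3 / 2) * η * max a 1) *
        ∫ x in Ioi a, Real.exp (-x ^ 2 / 2)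
      = Real.exp (-η ^ 2 / 2) *
        (Real.exp (-(η * K)) * ∫ x in Ioi a, Real.exp (-x ^ 2 / 2)) := by
        rw [show -η ^ 2 / 2 - Real.exp (3 / 2) * η * max a 1 = -η ^ 2 / 2 + -(η * K) by
          rw [hK]; ring, Real.exp_add, mul_assoc]
    _ ≤ Real.exp (-η ^ 2 / 2) *
        ∫ x in Ioi a, Real.exp (-(η * x)) * Real.exp (-x ^ 2 / 2) := by
        gcongr
    _ = ∫ x in Ioi a, Real.exp (-(x + η) ^ 2 / 2) := by
        simp_rw [exp_neg_add_sq_div_two, integral_const_mul]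
    _ = ∫ x in Ioi (a + η), Real.exp (-x ^ 2 / 2) :=
        (setIntegral_Ioi_add_right (fun x => Real.exp (-x ^ 2 / 2)) a η).symm
end

section
/- Let b : ℝ × ℝ → ℝ be such that y ↦ b(y,s) is concave for each s ∈ [t,T]. Define the functional F[y(·)] = (1/2)∫_t^T (y'(s) - b(y(s),s))² ds on C¹ paths. Let E be the set of C¹ functions y on [t,T] satisfying y'(s) ≥ b(y(s),s) for all s. If y₁, y₂ ∈ E and λ ∈ [0,1] are such that λy₁ + (1-λ)y₂ ∈ E, then F[λy₁ + (1-λ)y₂] ≤ λF[y₁] + (1-λ)F[y₂]. -/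
/-!
Pointwise in `s`, concavity of `b(·,s)` makes the residual `y' - b(y,s)` of the convex combination
at most the convex combination of the residuals. The combination lies in `E`, so its residual is
nonnegative and squaring keeps the inequality; convexity of `x ↦ x²` then bounds the square of the
combined residual by the combination of the squares, and integrating gives the claim.
-/

open MeasureTheory Set

section Pointwise

variable {E : Type*} [AddCommGroup E] [Module ℝ E] {φ : E → ℝ} {lam : ℝ}

lemma ConcaveOn.sub_apply_combo_le (hφ : ConcaveOn ℝ univ φ) (hlam : lam ∈ Icc (0 : ℝ) 1)
    (x₁ x₂ : E) (d₁ d₂ : ℝ) :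
    lam * d₁ + (1 - lam) * d₂ - φ (lam • x₁ + (1 - lam) • x₂) ≤
      lam * (d₁ - φ x₁) + (1 - lam) * (d₂ - φ x₂) := by
  have hdefect := hφ.2 (mem_univ x₁) (mem_univ x₂) hlam.1 (sub_nonneg.2 hlam.2) (by ring)
  simp only [smul_eq_mul] at hdefect
  linarith

lemma sq_le_combo_sq_of_nonneg_of_le {a₁ a₂ c : ℝ} (hlam : lam ∈ Icc (0 : ℝ) 1)
    (hc : 0 ≤ c) (hca : c ≤ lam * a₁ + (1 - lam) * a₂) :
    c ^ 2 ≤ lam * a₁ ^ 2 + (1 - lam) * a₂ ^ 2 :=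
  calc c ^ 2 ≤ (lam * a₁ + (1 - lam) * a₂) ^ 2 := pow_le_pow_left₀ hc hca 2
    _ ≤ lam * a₁ ^ 2 + (1 - lam) * a₂ ^ 2 :=
      (even_two.convexOn_pow (𝕜 := ℝ)).2 (mem_univ a₁) (mem_univ a₂) hlam.1
        (sub_nonneg.2 hlam.2) (by ring)

lemma ConcaveOn.sq_sub_apply_combo_le (hφ : ConcaveOn ℝ univ φ) (hlam : lam ∈ Icc (0 : ℝ) 1)
    (x₁ x₂ : E) (d₁ d₂ : ℝ) (hcombo : φ (lam • x₁ + (1 - lam) • x₂) ≤ lam * d₁ + (1 - lam) * d₂) :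
    (lam * d₁ + (1 - lam) * d₂ - φ (lam • x₁ + (1 - lam) • x₂)) ^ 2 ≤
      lam * (d₁ - φ x₁) ^ 2 + (1 - lam) * (d₂ - φ x₂) ^ 2 :=
  sq_le_combo_sq_of_nonneg_of_le hlam (sub_nonneg.2 hcombo)
    (hφ.sub_apply_combo_le hlam x₁ x₂ d₁ d₂)

end Pointwise

lemma intervalIntegral.integral_le_combo_of_le_on {t T lam : ℝ} (ht : t ≤ T) {f g₁ g₂ : ℝ → ℝ}
    (hf : IntervalIntegrable f volume t T) (hg₁ : IntervalIntegrable g₁ volume t T)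
    (hg₂ : IntervalIntegrable g₂ volume t T)
    (hle : ∀ s ∈ Icc t T, f s ≤ lam * g₁ s + (1 - lam) * g₂ s) :
    ∫ s in t..T, f s ≤ lam * (∫ s in t..T, g₁ s) + (1 - lam) * ∫ s in t..T, g₂ s := by
  have hg : IntervalIntegrable (fun s => lam * g₁ s + (1 - lam) * g₂ s) volume t T :=
    (hg₁.const_mul lam).add (hg₂.const_mul (1 - lam))
  calc ∫ s in t..T, f s ≤ ∫ s in t..T, (lam * g₁ s + (1 - lam) * g₂ s) :=
        intervalIntegral.integral_mono_on ht hf hg hle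
    _ = lam * (∫ s in t..T, g₁ s) + (1 - lam) * ∫ s in t..T, g₂ s := by
      rw [intervalIntegral.integral_add (hg₁.const_mul lam) (hg₂.const_mul (1 - lam)),
        intervalIntegral.integral_const_mul, intervalIntegral.integral_const_mul]

lemma intervalIntegrable_sq_sub_comp_graph {t T : ℝ} (ht : t ≤ T) {b : ℝ → ℝ → ℝ}
    (hb : Continuous fun p : ℝ × ℝ => b p.1 p.2) {y d : ℝ → ℝ}
    (hy : ContinuousOn y (Icc t T)) (hd : ContinuousOn d (Icc t T)) :
    IntervalIntegrable (fun s => (d s - b (y s) s) ^ 2) volume t T := by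
  have hby : ContinuousOn (fun s => b (y s) s) (Icc t T) :=
    hb.comp_continuousOn (hy.prodMk continuousOn_id)
  exact ((hd.sub hby).pow 2).intervalIntegrable_of_Icc ht

theorem action_functional_convex_on_cone_general (t T : ℝ) (ht : t ≤ T) (b : ℝ → ℝ → ℝ)
    (hb : Continuous fun p : ℝ × ℝ => b p.1 p.2)
    (hconc : ∀ s ∈ Set.Icc t T, ConcaveOn ℝ Set.univ fun y => b y s)
    (y₁ y₂ d₁ d₂ : ℝ → ℝ)
    (hy₁ : ∀ s ∈ Set.Icc t T, HasDerivAt y₁ (d₁ s) s)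
    (hy₂ : ∀ s ∈ Set.Icc t T, HasDerivAt y₂ (d₂ s) s)
    (hd₁ : Continuous d₁) (hd₂ : Continuous d₂)
    (lam : ℝ) (hlam : lam ∈ Set.Icc (0 : ℝ) 1)
    (hEc : ∀ s ∈ Set.Icc t T,
      b (lam * y₁ s + (1 - lam) * y₂ s) s ≤ lam * d₁ s + (1 - lam) * d₂ s) :
    (1 / 2) * (∫ s in t..T,
        (lam * d₁ s + (1 - lam) * d₂ s - b (lam * y₁ s + (1 - lam) * y₂ s) s) ^ 2) ≤
      lam * ((1 / 2) * ∫ s in t..T, (d₁ s - b (y₁ s) s) ^ 2) +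
        (1 - lam) * ((1 / 2) * ∫ s in t..T, (d₂ s - b (y₂ s) s) ^ 2) := by
  have hcy₁ : ContinuousOn y₁ (Icc t T) := fun s hs => (hy₁ s hs).continuousAt.continuousWithinAt
  have hcy₂ : ContinuousOn y₂ (Icc t T) := fun s hs => (hy₂ s hs).continuousAt.continuousWithinAt
  have hintegral := intervalIntegral.integral_le_combo_of_le_on ht
    (intervalIntegrable_sq_sub_comp_graph ht hb
      (y := fun s => lam * y₁ s + (1 - lam) * y₂ s) (d := fun s => lam * d₁ s + (1 - lam) * d₂ s)
      ((continuousOn_const.mul hcy₁).add (continuousOn_const.mul hcy₂))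
      ((continuous_const.mul hd₁).add (continuous_const.mul hd₂)).continuousOn)
    (intervalIntegrable_sq_sub_comp_graph ht hb hcy₁ hd₁.continuousOn)
    (intervalIntegrable_sq_sub_comp_graph ht hb hcy₂ hd₂.continuousOn)
    fun s hs => (hconc s hs).sq_sub_apply_combo_le hlam (y₁ s) (y₂ s) (d₁ s) (d₂ s) (hEc s hs)
  linarith

/-- Convexity of the action functional `F[y] = (1/2)∫_t^T (y' - b(y(s),s))² ds` on the cone
`E = {y ∈ C¹ : y'(s) ≥ b(y(s),s)}`, when `b(·,s)` is concave: if `y₁, y₂ ∈ E` and the convex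
combination `λy₁ + (1-λ)y₂ ∈ E`, then `F[λy₁+(1-λ)y₂] ≤ λF[y₁] + (1-λ)F[y₂]`. -/
theorem action_functional_convex_on_cone (t T : ℝ) (ht : t ≤ T) (b : ℝ → ℝ → ℝ)
    (hb : Continuous fun p : ℝ × ℝ => b p.1 p.2)
    (hconc : ∀ s ∈ Set.Icc t T, ConcaveOn ℝ Set.univ fun y => b y s)
    (y₁ y₂ d₁ d₂ : ℝ → ℝ)
    (hy₁ : ∀ s ∈ Set.Icc t T, HasDerivAt y₁ (d₁ s) s)
    (hy₂ : ∀ s ∈ Set.Icc t T, HasDerivAt y₂ (d₂ s) s)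
    (hd₁ : Continuous d₁) (hd₂ : Continuous d₂)
    (lam : ℝ) (hlam : lam ∈ Set.Icc (0 : ℝ) 1)
    (hE₁ : ∀ s ∈ Set.Icc t T, b (y₁ s) s ≤ d₁ s)
    (hE₂ : ∀ s ∈ Set.Icc t T, b (y₂ s) s ≤ d₂ s)
    (hEc : ∀ s ∈ Set.Icc t T,
      b (lam * y₁ s + (1 - lam) * y₂ s) s ≤ lam * d₁ s + (1 - lam) * d₂ s) :
    (1 / 2) * (∫ s in t..T,
        (lam * d₁ s + (1 - lam) * d₂ s - b (lam * y₁ s + (1 - lam) * y₂ s) s) ^ 2) ≤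
      lam * ((1 / 2) * ∫ s in t..T, (d₁ s - b (y₁ s) s) ^ 2) +
        (1 - lam) * ((1 / 2) * ∫ s in t..T, (d₂ s - b (y₂ s) s) ^ 2) :=
  action_functional_convex_on_cone_general t T ht b hb hconc y₁ y₂ d₁ d₂ hy₁ hy₂ hd₁ hd₂ lam hlam
    hEc
end

section
/- Let μ > 0, ε > 0, and Z(s) as above solve dZ = -μZ/(T-s) ds + √ε dW on [t,T) with Z(t) = z. Then E[∫_t^T Z(s)²/(T-s)² ds] = ∞. -/
/-!
The law of `Z s` is Gaussian, so `E[Z(s)²] ≥ Var Z(s)`. Restricting the integral defining the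
variance to the window `[2s - T, s]`, on which `T - u ≤ 2 (T - s)`, gives
`Var Z(s) ≥ ε 2^{-2μ} (T - s)`. After Tonelli the expected energy therefore dominates
`ε 2^{-2μ} ∫ ds / (T - s)` near `T`, which diverges.
-/

open MeasureTheory ProbabilityTheory Set

lemma integral_sq_gaussianReal (μ : ℝ) (v : NNReal) :
    ∫ x, x ^ 2 ∂gaussianReal μ v = μ ^ 2 + v := by
  have h := variance_eq_sub (memLp_id_gaussianReal (μ := μ) (v := v) 2)
  simp only [variance_id_gaussianReal, integral_id_gaussianReal, Pi.pow_apply, id] at h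
  linarith

lemma lintegral_ofReal_sq_div_of_map_eq_gaussianReal {Ω : Type*} [MeasurableSpace Ω]
    {P : Measure Ω} {X : Ω → ℝ} (hX : AEMeasurable X P) {μ d : ℝ} {v : NNReal}
    (hlaw : P.map X = gaussianReal μ v) (hd : 0 ≤ d) :
    ∫⁻ ω, ENNReal.ofReal (X ω ^ 2 / d) ∂P = ENNReal.ofReal ((μ ^ 2 + v) / d) := by
  have hint : Integrable (fun x : ℝ => x ^ 2 / d) (gaussianReal μ v) :=
    ((memLp_id_gaussianReal 2).integrable_sq).div_const d
  rw [← lintegral_map' (f := fun x => ENNReal.ofReal (x ^ 2 / d)) (by fun_prop) hX, hlaw,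
    ← integral_sq_gaussianReal, ← integral_div,
    ofReal_integral_eq_lintegral_ofReal hint (ae_of_all _ fun x => by positivity)]

lemma ofReal_div_le_lintegral_sq_div_sq_of_map_eq_gaussianReal {Ω : Type*} [MeasurableSpace Ω]
    {P : Measure Ω} {X : Ω → ℝ} (hX : AEMeasurable X P) {μ c d V : ℝ}
    (hlaw : P.map X = gaussianReal μ V.toNNReal) (hd : 0 < d) (hV : c * d ≤ V) :
    ENNReal.ofReal (c / d) ≤ ∫⁻ ω, ENNReal.ofReal (X ω ^ 2 / d ^ 2) ∂P := by
  rw [lintegral_ofReal_sq_div_of_map_eq_gaussianReal hX hlaw (sq_nonneg d)]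
  refine ENNReal.ofReal_le_ofReal ?_
  calc c / d = c * d / d ^ 2 := by field_simp
    _ ≤ (μ ^ 2 + V.toNNReal) / d ^ 2 := by
        gcongr
        exact hV.trans ((Real.le_coe_toNNReal V).trans (le_add_of_nonneg_left (sq_nonneg μ)))

lemma mul_rpow_le_integral_rpow_sub {p t s T : ℝ} (hp : p ≤ 0) (hts : t ≤ 2 * s - T)
    (hsT : s < T) : (T - s) * (2 * (T - s)) ^ p ≤ ∫ u in t..s, (T - u) ^ p := by
  have hint : ∀ a, a ≤ s → IntervalIntegrable (fun u => (T - u) ^ p) volume a s := by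
    intro a has
    refine (ContinuousOn.rpow_const (by fun_prop) fun u hu => Or.inl ?_).intervalIntegrable
    rw [uIcc_of_le has] at hu
    linarith [hu.2]
  calc (T - s) * (2 * (T - s)) ^ p = ∫ u in (2 * s - T)..s, (2 * (T - s)) ^ p := by
        rw [intervalIntegral.integral_const, smul_eq_mul]; ring
    _ ≤ ∫ u in (2 * s - T)..s, (T - u) ^ p := by
        refine intervalIntegral.integral_mono_on (by linarith) (by simp) (hint _ (by linarith)) ?_
        intro u hu
        exact Real.rpow_le_rpow_of_nonpos (by linarith [hu.2]) (by linarith [hu.1]) hp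
    _ ≤ ∫ u in t..s, (T - u) ^ p := by
        refine intervalIntegral.integral_mono_interval hts (by linarith) le_rfl ?_
          (hint t (by linarith))
        filter_upwards [ae_restrict_mem measurableSet_Ioc] with u hu
        exact Real.rpow_nonneg (by linarith [hu.2]) p

lemma two_rpow_neg_mul_sub_le_rpow_mul_integral_rpow_neg {q t s T : ℝ} (hq : 0 ≤ q)
    (hts : t ≤ 2 * s - T) (hsT : s < T) :
    2 ^ (-q) * (T - s) ≤ (T - s) ^ q * ∫ u in t..s, (T - u) ^ (-q) := by
  have hTs : 0 < T - s := sub_pos.2 hsT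
  calc 2 ^ (-q) * (T - s) = (T - s) ^ q * ((T - s) * (2 * (T - s)) ^ (-q)) := by
        rw [Real.mul_rpow zero_le_two hTs.le, Real.rpow_neg hTs.le]
        field_simp
    _ ≤ (T - s) ^ q * ∫ u in t..s, (T - u) ^ (-q) := by
        gcongr
        exact mul_rpow_le_integral_rpow_sub (by linarith) hts hsT

lemma lintegral_Ioo_ofReal_div_sub_eq_top {a c T : ℝ} (hc : 0 < c) (haT : a < T) :
    ∫⁻ s in Ioo a T, ENNReal.ofReal (c / (T - s)) = ⊤ := by
  by_contra h
  have hint : IntegrableOn (fun s => c / (T - s)) (Ioo a T) := by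
    refine ⟨(by fun_prop : Measurable fun s => c / (T - s)).aestronglyMeasurable,
      (hasFiniteIntegral_iff_ofReal ?_).2 (lt_top_iff_ne_top.2 h)⟩
    filter_upwards [ae_restrict_mem measurableSet_Ioo] with s hs
    exact div_nonneg hc.le (sub_nonneg.2 hs.2.le)
  have hsub : (fun s => (s - T)⁻¹) = fun s => -c⁻¹ * (c / (T - s)) := by
    funext s
    rw [← neg_sub T s, inv_neg, neg_mul, div_eq_mul_inv, inv_mul_cancel_left₀ hc.ne']
  have : IntervalIntegrable (fun s => (s - T)⁻¹) volume a T := by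
    rw [intervalIntegrable_iff_integrableOn_Ioo_of_le haT.le, hsub]
    exact hint.const_mul _
  simp [haT.ne] at this

/-- For the solution `Z` of `dZ = -μZ/(T-s) ds + √ε dW` on `[t,T)` with `Z(t) = z`
(a Gaussian process with mean `((T-s)/(T-t))^μ z` and variance
`ε (T-s)^{2μ} ∫_t^s (T-u)^{-2μ} du`), one has `E[∫_t^T Z(s)²/(T-s)² ds] = ∞`. -/
theorem ou_bridge_expected_energy_infinite {Ω : Type*} [MeasurableSpace Ω] (P : Measure Ω)
    [IsProbabilityMeasure P] (t T z ε m : ℝ) (hm : 0 < m) (hε : 0 < ε) (ht : t < T)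
    (Z : ℝ → Ω → ℝ) (hmeas : Measurable (Function.uncurry Z))
    (hdist : ∀ s, t ≤ s → s < T →
      Measure.map (Z s) P =
        gaussianReal (((T - s) / (T - t)) ^ m * z)
          (Real.toNNReal (ε * (T - s) ^ (2 * m) * ∫ u in t..s, (T - u) ^ (-(2 * m))))) :
    (∫⁻ ω, (∫⁻ s in Set.Ioo t T, ENNReal.ofReal ((Z s ω) ^ 2 / (T - s) ^ 2)) ∂P) = ⊤ := by
  rw [lintegral_lintegral_swap ((hmeas.comp measurable_swap).aemeasurable.pow_const 2
    |>.div (by fun_prop) |>.ennreal_ofReal), eq_top_iff]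
  set c := ε * 2 ^ (-(2 * m))
  have hbound : ∀ s ∈ Ioo ((t + T) / 2) T, ENNReal.ofReal (c / (T - s)) ≤
      ∫⁻ ω, ENNReal.ofReal (Z s ω ^ 2 / (T - s) ^ 2) ∂P := by
    rintro s ⟨hs, hsT⟩
    have hvar : c * (T - s) ≤ ε * (T - s) ^ (2 * m) * ∫ u in t..s, (T - u) ^ (-(2 * m)) := by
      have h := two_rpow_neg_mul_sub_le_rpow_mul_integral_rpow_neg (q := 2 * m) (by positivity)
        (by linarith : t ≤ 2 * s - T) hsT
      linarith [mul_le_mul_of_nonneg_left h hε.le]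
    exact ofReal_div_le_lintegral_sq_div_sq_of_map_eq_gaussianReal
      (hmeas.comp measurable_prodMk_left).aemeasurable (hdist s (by linarith) hsT)
      (sub_pos.2 hsT) hvar
  calc ⊤ = ∫⁻ s in Ioo ((t + T) / 2) T, ENNReal.ofReal (c / (T - s)) :=
        (lintegral_Ioo_ofReal_div_sub_eq_top (by positivity) (by linarith)).symm
    _ ≤ ∫⁻ s in Ioo ((t + T) / 2) T,
          ∫⁻ ω, ENNReal.ofReal (Z s ω ^ 2 / (T - s) ^ 2) ∂P :=
        setLIntegral_mono' measurableSet_Ioo hbound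
    _ ≤ ∫⁻ s in Ioo t T, ∫⁻ ω, ENNReal.ofReal (Z s ω ^ 2 / (T - s) ^ 2) ∂P :=
        lintegral_mono_set (Ioo_subset_Ioo (by linarith) le_rfl)
end

section
/- Let q : ℝ² → ℝ be convex in (x,y) on the open set U = {(x,y) : y < F(x)} where F is a convex function, with q(x,y) = 0 whenever y ≥ F(x), and suppose q is continuous on ℝ² and convex on the convex set V = {(x,y) : y ≥ F(x)} (where it vanishes). If q is locally convex on U, then q is convex on all of ℝ². -/
/-!
Restrict `q` to a segment and subtract its chord. The difference `φ` vanishes at the endpoints,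
and wherever `φ > 0` we have `q > chord ≥ 0`, so `q` is convex near that point. If `φ` had a
positive maximum, the leftmost point where it is attained would be interior, and the midpoint
inequality there would force the maximum to be attained further left as well. Hence `φ ≤ 0`
along every segment.
-/

open Set Filter Topology AffineMap

lemma ConvexOn.sub_affineMap {𝕜 E β : Type*} [Field 𝕜] [LinearOrder 𝕜] [AddCommGroup E]
    [Module 𝕜 E] [AddCommGroup β] [PartialOrder β] [IsOrderedAddMonoid β] [Module 𝕜 β]
    {s : Set E} {f : E → β} (hf : ConvexOn 𝕜 s f) (ℓ : E →ᵃ[𝕜] β) :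
    ConvexOn 𝕜 s (f - ⇑ℓ) := by
  refine ⟨hf.1, fun x hx y hy a b ha hb hab => ?_⟩
  calc f (a • x + b • y) - ℓ (a • x + b • y)
      ≤ a • f x + b • f y - (a • ℓ x + b • ℓ y) := by
        rw [Convex.combo_affine_apply hab]
        exact sub_le_sub_right (hf.2 hx hy ha hb hab) _
    _ = a • (f - ℓ) x + b • (f - ℓ) y := by
        simp only [Pi.sub_apply, smul_sub]
        abel

theorem nonpos_on_Icc_of_convexOn_nhds_of_pos {φ : ℝ → ℝ} {u v : ℝ}
    (hφ : ContinuousOn φ (Icc u v)) (hu : φ u ≤ 0) (hv : φ v ≤ 0)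
    (hloc : ∀ t ∈ Ioo u v, 0 < φ t → ∃ s ∈ 𝓝 t, ConvexOn ℝ s φ) :
    ∀ t ∈ Icc u v, φ t ≤ 0 := by
  by_contra! ⟨t, ht, hφt⟩
  obtain ⟨τ₀, hτ₀, hmax⟩ := isCompact_Icc.exists_isMaxOn ⟨t, ht⟩ hφ
  set M := φ τ₀
  have hM : 0 < M := hφt.trans_le (hmax ht)
  set A := Icc u v ∩ φ ⁻¹' {M}
  have hAbdd : BddBelow A := ⟨u, fun _ h => h.1.1⟩
  have hτA : sInf A ∈ A :=
    (hφ.preimage_isClosed_of_isClosed isClosed_Icc isClosed_singleton).csInf_mem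
      ⟨τ₀, hτ₀, rfl⟩ hAbdd
  set τ := sInf A
  obtain ⟨hτI, hφτ : φ τ = M⟩ := hτA
  have hτu : u < τ := hτI.1.lt_of_ne fun h => by rw [← h] at hφτ; linarith
  have hτv : τ < v := hτI.2.lt_of_ne fun h => by rw [h] at hφτ; linarith
  obtain ⟨s, hs, hconv⟩ := hloc τ ⟨hτu, hτv⟩ (hφτ ▸ hM)
  obtain ⟨δ, hδ, hball⟩ := Metric.mem_nhds_iff.1 (inter_mem hs (Icc_mem_nhds hτu hτv))
  rw [Real.ball_eq_Ioo] at hball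
  have hl : τ - δ / 2 ∈ s ∩ Icc u v := hball ⟨by linarith, by linarith⟩
  have hr : τ + δ / 2 ∈ s ∩ Icc u v := hball ⟨by linarith, by linarith⟩
  have hleft : φ (τ - δ / 2) < M := by
    refine (hmax hl.2).lt_of_ne fun h => ?_
    have := csInf_le hAbdd ⟨hl.2, h⟩
    linarith
  have hmid := hconv.2 hl.1 hr.1 (by norm_num : (0 : ℝ) ≤ 1 / 2) (by norm_num : (0 : ℝ) ≤ 1 / 2)
    (by norm_num)
  rw [show (1 / 2 : ℝ) • (τ - δ / 2) + (1 / 2 : ℝ) • (τ + δ / 2) = τ by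
    simp only [smul_eq_mul]; ring, hφτ, smul_eq_mul, smul_eq_mul] at hmid
  have hright : φ (τ + δ / 2) ≤ M := hmax hr.2
  linarith

theorem convexOn_univ_of_convexOn_nhds_of_pos {E : Type*} [AddCommGroup E] [Module ℝ E]
    [TopologicalSpace E] [IsTopologicalAddGroup E] [ContinuousSMul ℝ E] {q : E → ℝ}
    (hq : Continuous q) (hnn : ∀ p, 0 ≤ q p)
    (hloc : ∀ p, 0 < q p → ∃ s ∈ 𝓝 p, ConvexOn ℝ s q) :
    ConvexOn ℝ univ q := by
  refine ⟨convex_univ, fun x _ y _ a b ha hb hab => ?_⟩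
  set L : ℝ →ᵃ[ℝ] E := lineMap x y
  set chord : ℝ →ᵃ[ℝ] ℝ := lineMap (q x) (q y)
  have hchord : ∀ t ∈ Icc (0 : ℝ) 1, 0 ≤ chord t := fun t ht => by
    rw [lineMap_apply_module]
    exact add_nonneg (smul_nonneg (sub_nonneg.2 ht.2) (hnn x)) (smul_nonneg ht.1 (hnn y))
  have key := nonpos_on_Icc_of_convexOn_nhds_of_pos (φ := q ∘ L - chord) (u := 0) (v := 1)
    ((hq.comp lineMap_continuous).sub lineMap_continuous).continuousOn
    (by simp [L, chord]) (by simp [L, chord])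
    (fun t ht hpos => by
      have hlt : chord t < q (L t) := sub_pos.1 hpos
      obtain ⟨s, hs, hconv⟩ := hloc (L t) (by linarith [hchord t (Ioo_subset_Icc_self ht)])
      exact ⟨L ⁻¹' s, lineMap_continuous.continuousAt.preimage_mem_nhds hs,
        (hconv.comp_affineMap L).sub_affineMap chord⟩)
    b ⟨hb, by linarith⟩
  have ha' : 1 - b = a := by linarith
  simpa [L, chord, lineMap_apply_module, ha', sub_nonpos] using key

theorem convexity_from_local_convexity_and_vanishing_general
    (F : ℝ → ℝ)
    (q : ℝ × ℝ → ℝ) (hq : Continuous q) (hnn : ∀ p, 0 ≤ q p)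
    (hzero : ∀ p : ℝ × ℝ, F p.1 ≤ p.2 → q p = 0)
    (hloc : ∀ p : ℝ × ℝ, p.2 < F p.1 → ∃ ε > 0, ConvexOn ℝ (Metric.ball p ε) q) :
    ConvexOn ℝ Set.univ q := by
  refine convexOn_univ_of_convexOn_nhds_of_pos hq hnn fun p hp => ?_
  have hpU : p.2 < F p.1 := lt_of_not_ge fun hpV => hp.ne' (hzero p hpV)
  obtain ⟨ε, hε, hconv⟩ := hloc p hpU
  exact ⟨Metric.ball p ε, Metric.ball_mem_nhds p hε, hconv⟩

/-- Let `F : ℝ → ℝ` be convex and let `q : ℝ² → ℝ` be continuous and nonnegative, vanishing on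
the convex set `V = {(x,y) : y ≥ F(x)}` and locally convex on the open set
`U = {(x,y) : y < F(x)}`. Then `q` is convex on all of `ℝ²`. -/
theorem convexity_from_local_convexity_and_vanishing
    (F : ℝ → ℝ) (hF : ConvexOn ℝ Set.univ F)
    (q : ℝ × ℝ → ℝ) (hq : Continuous q) (hnn : ∀ p, 0 ≤ q p)
    (hzero : ∀ p : ℝ × ℝ, F p.1 ≤ p.2 → q p = 0)
    (hloc : ∀ p : ℝ × ℝ, p.2 < F p.1 → ∃ ε > 0, ConvexOn ℝ (Metric.ball p ε) q) :
    ConvexOn ℝ Set.univ q :=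
  convexity_from_local_convexity_and_vanishing_general F q hq hnn hzero hloc
end

section
/- Let V : [t,T] → [0,∞) be continuous, and let (φ, ψ) : [t,T] → ℝ² solve the linear system φ'(s) = a(s)φ(s) - ψ(s), ψ'(s) = -a(s)ψ(s) - V(s)φ(s), with terminal data φ(T) = 0, ψ(T) = 1, where a : [t,T] → ℝ is continuous. Then φ(s) > 0 and ψ(s) > 0 for all s ∈ [t,T). -/
/-!
The product `φ ψ` satisfies `(φ ψ)' = -(ψ² + V φ²) ≤ 0`, so it decreases to `φ(T) ψ(T) = 0`;
since `ψ > 0` near `T`, the decrease is strict, hence `φ ψ > 0` on `[t,T)`. Then `ψ` has no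
zero on `[s,T]` for `s < T` and `ψ(T) = 1`, so `ψ(s) > 0` by the intermediate value theorem,
and finally `φ(s) > 0`.
-/

open Set Filter Topology

theorem hasDerivAt_mul_of_jacobi {a V φ ψ : ℝ → ℝ} {s : ℝ}
    (hφ : HasDerivAt φ (a s * φ s - ψ s) s) (hψ : HasDerivAt ψ (-(a s) * ψ s - V s * φ s) s) :
    HasDerivAt (fun x => φ x * ψ x) (-(ψ s ^ 2 + V s * φ s ^ 2)) s :=
  (hφ.mul hψ).congr_deriv (by ring)

theorem lt_of_deriv_nonpos_of_eventually_neg {g g' : ℝ → ℝ} {s T : ℝ} (hsT : s < T)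
    (hcont : ContinuousOn g (Icc s T)) (hg : ∀ x ∈ Ioo s T, HasDerivAt g (g' x) x)
    (hg'_nonpos : ∀ x ∈ Ioo s T, g' x ≤ 0) (hg'_neg : ∀ᶠ x in 𝓝[<] T, g' x < 0) :
    g T < g s := by
  obtain ⟨l, hlT, hl⟩ := mem_nhdsLT_iff_exists_Ioo_subset.1 hg'_neg
  set c := max l s
  have hcT : c < T := max_lt hlT hsT
  have hsc : s ≤ c := le_max_right l s
  have hdiff : DifferentiableOn ℝ g (interior (Icc s T)) := fun x hx => by
    rw [interior_Icc] at hx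
    exact (hg x hx).differentiableAt.differentiableWithinAt
  have hanti : AntitoneOn g (Icc s T) :=
    antitoneOn_of_deriv_nonpos (convex_Icc s T) hcont hdiff fun x hx => by
      rw [interior_Icc] at hx
      exact (hg x hx).deriv ▸ hg'_nonpos x hx
  have hstrict : StrictAntiOn g (Icc c T) :=
    strictAntiOn_of_deriv_neg (convex_Icc c T) (hcont.mono (Icc_subset_Icc_left hsc))
      fun x hx => by
        rw [interior_Icc] at hx
        exact (hg x ⟨hsc.trans_lt hx.1, hx.2⟩).deriv ▸ hl ⟨(le_max_left l s).trans_lt hx.1, hx.2⟩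
  calc g T < g c := hstrict ⟨le_rfl, hcT.le⟩ ⟨hcT.le, le_rfl⟩ hcT
    _ ≤ g s := hanti ⟨le_rfl, hsT.le⟩ ⟨hsc, hcT.le⟩ hsc

theorem pos_of_continuousOn_Icc_of_ne_zero {f : ℝ → ℝ} {s T : ℝ} (hsT : s ≤ T)
    (hf : ContinuousOn f (Icc s T)) (hne : ∀ x ∈ Icc s T, f x ≠ 0) (hT : 0 < f T) :
    0 < f s := by
  by_contra! hs
  obtain ⟨x, hx, hfx⟩ := intermediate_value_Icc hsT hf ⟨hs, hT.le⟩
  exact hne x hx hfx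

theorem mul_pos_of_jacobi {t T : ℝ} {a V φ ψ : ℝ → ℝ} (hVnn : ∀ s ∈ Icc t T, 0 ≤ V s)
    (hφ : ∀ s ∈ Icc t T, HasDerivAt φ (a s * φ s - ψ s) s)
    (hψ : ∀ s ∈ Icc t T, HasDerivAt ψ (-(a s) * ψ s - V s * φ s) s)
    (hφT : φ T = 0) (hψT : ψ T = 1) {s : ℝ} (hs : s ∈ Ico t T) :
    0 < φ s * ψ s := by
  obtain ⟨hts, hsT⟩ := hs
  have hsub : Icc s T ⊆ Icc t T := Icc_subset_Icc_left hts
  have hderiv : ∀ x ∈ Icc s T, HasDerivAt (fun x => φ x * ψ x) (-(ψ x ^ 2 + V x * φ x ^ 2)) x :=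
    fun x hx => hasDerivAt_mul_of_jacobi (hφ x (hsub hx)) (hψ x (hsub hx))
  have hψ_pos_near : ∀ᶠ x in 𝓝[<] T, 0 < ψ x := nhdsWithin_le_nhds <|
    (hψ T ⟨hts.trans hsT.le, le_rfl⟩).continuousAt.eventually
      (eventually_gt_nhds (by rw [hψT]; exact one_pos))
  have hlt := lt_of_deriv_nonpos_of_eventually_neg hsT
    (fun x hx => (hderiv x hx).continuousAt.continuousWithinAt)
    (fun x hx => hderiv x (Ioo_subset_Icc_self hx))
    (fun x hx => by nlinarith [hVnn x (hsub (Ioo_subset_Icc_self hx)), sq_nonneg (φ x)])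
    (by
      filter_upwards [hψ_pos_near, Ioo_mem_nhdsLT hsT] with x hψx hx
      nlinarith [hVnn x (hsub (Ioo_subset_Icc_self hx)), sq_nonneg (φ x)])
  simpa [hφT] using hlt

theorem jacobi_system_positivity_general (t T : ℝ) (a V φ ψ : ℝ → ℝ)
    (hVnn : ∀ s ∈ Set.Icc t T, 0 ≤ V s)
    (hφ : ∀ s ∈ Set.Icc t T, HasDerivAt φ (a s * φ s - ψ s) s)
    (hψ : ∀ s ∈ Set.Icc t T, HasDerivAt ψ (-(a s) * ψ s - V s * φ s) s)
    (hφT : φ T = 0) (hψT : ψ T = 1) :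
    ∀ s ∈ Set.Ico t T, 0 < φ s ∧ 0 < ψ s := by
  have hprod_pos := fun s (hs : s ∈ Ico t T) => mul_pos_of_jacobi hVnn hφ hψ hφT hψT hs
  intro s hs
  have hψ_ne : ∀ x ∈ Icc s T, ψ x ≠ 0 := by
    intro x hx
    rcases hx.2.lt_or_eq with hxT | rfl
    · exact right_ne_zero_of_mul (hprod_pos x ⟨hs.1.trans hx.1, hxT⟩).ne'
    · rw [hψT]; exact one_ne_zero
  have hψs : 0 < ψ s :=
    pos_of_continuousOn_Icc_of_ne_zero hs.2.le
      (fun x hx => (hψ x (Icc_subset_Icc_left hs.1 hx)).continuousAt.continuousWithinAt) hψ_ne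
      (by rw [hψT]; exact one_pos)
  exact ⟨pos_of_mul_pos_left (hprod_pos s hs) hψs.le, hψs⟩

/-- Positivity for the Jacobi-type system `φ' = aφ - ψ`, `ψ' = -aψ - Vφ` with terminal data
`φ(T) = 0`, `ψ(T) = 1` and `V ≥ 0`: both `φ` and `ψ` are strictly positive on `[t,T)`. -/
theorem jacobi_system_positivity (t T : ℝ) (ht : t < T) (a V φ ψ : ℝ → ℝ)
    (ha : ContinuousOn a (Set.Icc t T)) (hV : ContinuousOn V (Set.Icc t T))
    (hVnn : ∀ s ∈ Set.Icc t T, 0 ≤ V s)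
    (hφ : ∀ s ∈ Set.Icc t T, HasDerivAt φ (a s * φ s - ψ s) s)
    (hψ : ∀ s ∈ Set.Icc t T, HasDerivAt ψ (-(a s) * ψ s - V s * φ s) s)
    (hφT : φ T = 0) (hψT : ψ T = 1) :
    ∀ s ∈ Set.Ico t T, 0 < φ s ∧ 0 < ψ s :=
  jacobi_system_positivity_general t T a V φ ψ hVnn hφ hψ hφT hψT
end
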